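/- arXiv:1508.01238 — 8 statements merged into one kernel-verified Lean document; each statement's English description precedes it below -/
import Mathlib

section
/- Every matrix A ∈ M_d(ℂ) with trace zero is unitarily similar to a matrix with all diagonal entries equal to zero; that is, there exists a unitary U such that U⁻¹AU has zero diagonal. -/
/-!
The numerical range `{⟪x, T x⟫ | ‖x‖ = 1}` of an operator on a complex inner product space is
convex (Toeplitz–Hausdorff), and the diagonal entries `⟪bᵢ, T bᵢ⟫` in any orthonormal basis lie in
it, so it contains their mean `trace T / dim E`. For a traceless `T` this yields a unit vector `x`
with `⟪x, T x⟫ = 0`; the compression of `T` to `xᗮ` is again traceless, and induction on the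
dimension produces an orthonormal basis in which `T` has zero diagonal. Its change-of-basis matrix
is the required unitary.
-/

open Module InnerProductSpace
open scoped InnerProductSpace ComplexConjugate

lemma Complex.exists_norm_eq_one_mul_im_eq_zero (w : ℂ) : ∃ u : ℂ, ‖u‖ = 1 ∧ (u * w).im = 0 := by
  rcases eq_or_ne w 0 with rfl | hw
  · exact ⟨1, by simp, by simp⟩
  refine ⟨conj w / ‖w‖, ?_, ?_⟩
  · simp [hw]
  · rw [div_mul_eq_mul_div, Complex.conj_mul', ← Complex.ofReal_pow, Complex.div_ofReal_im,
      Complex.ofReal_im, zero_div]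

section RCLike

variable {𝕜 E : Type*} [RCLike 𝕜] [NormedAddCommGroup E] [InnerProductSpace 𝕜 E]

lemma orthonormal_cons_orthogonal_span_singleton {x : E} (hx : ‖x‖ = 1) {n : ℕ}
    {c : Fin n → (𝕜 ∙ x)ᗮ} (hc : Orthonormal 𝕜 c) :
    Orthonormal 𝕜 (Fin.cons x (fun i => (c i : E)) : Fin (n + 1) → E) := by
  rw [orthonormal_iff_ite] at hc ⊢
  have hxc (i : Fin n) : ⟪x, (c i : E)⟫_𝕜 = 0 :=
    Submodule.mem_orthogonal_singleton_iff_inner_right.mp (c i).2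
  intro i j
  cases i using Fin.cases <;> cases j using Fin.cases <;>
    simp [inner_self_eq_norm_sq_to_K, hx, hxc, inner_eq_zero_symm.mp (hxc _), ← hc,
      (Fin.succ_ne_zero _).symm]

namespace OrthonormalBasis

variable [FiniteDimensional 𝕜 E] {x : E} {n : ℕ}

noncomputable def consOrthogonal (c : OrthonormalBasis (Fin n) 𝕜 (𝕜 ∙ x)ᗮ) (hx : ‖x‖ = 1) :
    OrthonormalBasis (Fin (n + 1)) 𝕜 E :=
  have hv := orthonormal_cons_orthogonal_span_singleton hx c.orthonormal
  .mk hv <| by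
    refine (hv.linearIndependent.span_eq_top_of_card_eq_finrank' ?_).ge
    rw [← Submodule.finrank_add_finrank_orthogonal (𝕜 ∙ x), finrank_span_singleton
      (norm_ne_zero_iff.mp (hx.trans_ne one_ne_zero)), finrank_eq_card_basis c.toBasis]
    simp [add_comm]

@[simp] lemma consOrthogonal_zero (c : OrthonormalBasis (Fin n) 𝕜 (𝕜 ∙ x)ᗮ) (hx : ‖x‖ = 1) :
    c.consOrthogonal hx 0 = x := by
  simp [consOrthogonal]

@[simp] lemma consOrthogonal_succ (c : OrthonormalBasis (Fin n) 𝕜 (𝕜 ∙ x)ᗮ) (hx : ‖x‖ = 1)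
    (i : Fin n) : c.consOrthogonal hx i.succ = c i := by
  simp [consOrthogonal]

end OrthonormalBasis

namespace LinearMap

def numericalRange (T : E →ₗ[𝕜] E) : Set 𝕜 := {z | ∃ x, ‖x‖ = 1 ∧ ⟪x, T x⟫_𝕜 = z}

lemma inner_smul_apply_smul (T : E →ₗ[𝕜] E) (c : 𝕜) (x : E) :
    ⟪c • x, T (c • x)⟫_𝕜 = conj c * c * ⟪x, T x⟫_𝕜 := by
  rw [map_smul, inner_smul_left, inner_smul_right, ← mul_assoc]

lemma zero_mem_numericalRange_of_inner_apply_self_eq_zero {T : E →ₗ[𝕜] E} {x : E} (hx : x ≠ 0)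
    (hTx : ⟪x, T x⟫_𝕜 = 0) : (0 : 𝕜) ∈ T.numericalRange :=
  ⟨(‖x‖⁻¹ : 𝕜) • x, norm_smul_inv_norm hx, by rw [inner_smul_apply_smul, hTx, mul_zero]⟩

noncomputable def compression (T : E →ₗ[𝕜] E) (K : Submodule 𝕜 E) [K.HasOrthogonalProjection] :
    K →ₗ[𝕜] K :=
  K.orthogonalProjectionOnto.toLinearMap ∘ₗ T ∘ₗ K.subtype

lemma inner_compression_apply (T : E →ₗ[𝕜] E) (K : Submodule 𝕜 E) [K.HasOrthogonalProjection]
    (u v : K) : ⟪u, T.compression K v⟫_𝕜 = ⟪(u : E), T v⟫_𝕜 :=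
  Submodule.inner_orthogonalProjectionOnto_eq_of_mem_left _ _

lemma trace_compression_orthogonal_span_singleton [FiniteDimensional 𝕜 E] (T : E →ₗ[𝕜] E)
    {x : E} (hx : ‖x‖ = 1) :
    trace 𝕜 _ (T.compression (𝕜 ∙ x)ᗮ) = trace 𝕜 E T - ⟪x, T x⟫_𝕜 := by
  set c := stdOrthonormalBasis 𝕜 (𝕜 ∙ x)ᗮ
  rw [trace_eq_sum_inner T (c.consOrthogonal hx), Fin.sum_univ_succ, trace_eq_sum_inner _ c]
  simp only [inner_compression_apply, OrthonormalBasis.consOrthogonal_zero,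
    OrthonormalBasis.consOrthogonal_succ, add_sub_cancel_left]

end LinearMap

end RCLike

namespace LinearMap

variable {E : Type*} [NormedAddCommGroup E] [InnerProductSpace ℂ E]

lemma inner_apply_self_ofReal_smul_add_smul (T : E →ₗ[ℂ] E) (x y : E) (r s : ℝ) :
    ⟪(r : ℂ) • x + (s : ℂ) • y, T ((r : ℂ) • x + (s : ℂ) • y)⟫_ℂ =
      r ^ 2 * ⟪x, T x⟫_ℂ + r * s * (⟪x, T y⟫_ℂ + ⟪y, T x⟫_ℂ) + s ^ 2 * ⟪y, T y⟫_ℂ := by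
  simp only [map_add, map_smul, inner_add_left, inner_add_right, inner_smul_left,
    inner_smul_right, Complex.conj_ofReal]
  ring

lemma zero_mem_numericalRange_of_nonneg_of_nonpos (T : E →ₗ[ℂ] E) {x y : E} (hx : x ≠ 0)
    (hy : y ≠ 0) {a b : ℝ} (ha : 0 ≤ a) (hb : b ≤ 0) (hTx : ⟪x, T x⟫_ℂ = a)
    (hTy : ⟪y, T y⟫_ℂ = b) : (0 : ℂ) ∈ T.numericalRange := by
  -- rotating `y` by a phase makes the cross terms real, so the form is real along the segment
  obtain ⟨u, hu, hu_im⟩ := Complex.exists_norm_eq_one_mul_im_eq_zero (⟪x, T y⟫_ℂ - conj ⟪y, T x⟫_ℂ)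
  set y' := u • y
  obtain ⟨c, hc⟩ : ∃ c : ℝ, ⟪x, T y'⟫_ℂ + ⟪y', T x⟫_ℂ = c := by
    refine ⟨_, Complex.ext (Complex.ofReal_re _).symm ?_⟩
    rw [Complex.ofReal_im]
    simp only [y', map_smul, inner_smul_left, inner_smul_right, Complex.add_im, Complex.mul_im,
      Complex.sub_re, Complex.sub_im, Complex.conj_re, Complex.conj_im]
      at hu_im ⊢
    linarith
  have hTy' : ⟪y', T y'⟫_ℂ = b := by rw [inner_smul_apply_smul, Complex.conj_mul', hu, hTy]; simp
  set g : ℝ → ℝ := fun t => (1 - t) ^ 2 * a + (1 - t) * t * c + t ^ 2 * b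
  obtain ⟨t, -, hgt⟩ : ∃ t ∈ Set.Icc (0 : ℝ) 1, g t = 0 :=
    intermediate_value_Icc' zero_le_one (by fun_prop)
      ⟨by simpa [g] using hb, by simpa [g] using ha⟩
  set z := ((1 - t : ℝ) : ℂ) • x + (t : ℂ) • y'
  have hTz : ⟪z, T z⟫_ℂ = 0 := by
    rw [inner_apply_self_ofReal_smul_add_smul, hTx, hTy', hc]
    exact_mod_cast hgt
  rcases ne_or_eq z 0 with hz | hz
  · exact zero_mem_numericalRange_of_inner_apply_self_eq_zero hz hTz
  -- a vanishing point of the segment forces `b = 0`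
  have ht : t ≠ 0 := by rintro rfl; simp [z, hx] at hz
  have hyx : (t : ℂ) • y' = -((1 - t : ℝ) : ℂ) • x := by
    rw [neg_smul, eq_neg_iff_add_eq_zero, add_comm]; exact hz
  have key : t ^ 2 * b = (1 - t) ^ 2 * a := by
    have key := congrArg (fun v => ⟪v, T v⟫_ℂ) hyx
    simp only [inner_smul_apply_smul, hTx, hTy', map_neg, Complex.conj_ofReal] at key
    linear_combination (by exact_mod_cast key : t * t * b = -(1 - t) * -(1 - t) * a)
  have hb0 : b = 0 := by
    have htb : t ^ 2 * b = 0 := le_antisymm (mul_nonpos_of_nonneg_of_nonpos (sq_nonneg t) hb)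
      (key ▸ mul_nonneg (sq_nonneg _) ha)
    exact (mul_eq_zero.mp htb).resolve_left (pow_ne_zero 2 ht)
  exact zero_mem_numericalRange_of_inner_apply_self_eq_zero hy (by rw [hTy, hb0]; simp)

theorem convex_numericalRange (T : E →ₗ[ℂ] E) : Convex ℝ T.numericalRange := by
  rintro _ ⟨x, hx, rfl⟩ _ ⟨y, hy, rfl⟩ s t hs ht hst
  set w := s • ⟪x, T x⟫_ℂ + t • ⟪y, T y⟫_ℂ
  set δ := ⟪x, T x⟫_ℂ - ⟪y, T y⟫_ℂ
  rcases eq_or_ne δ 0 with hδ | hδ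
  · refine ⟨x, hx, ?_⟩
    simp only [w]
    rw [sub_eq_zero.mp hδ, ← add_smul, hst, one_smul]
  -- shift `w` to the origin and rotate so that `x` and `y` land on opposite real half-lines
  set M := conj δ • (T - w • LinearMap.id)
  have hM : ∀ v : E, ‖v‖ = 1 → ⟪v, M v⟫_ℂ = conj δ * (⟪v, T v⟫_ℂ - w) := fun v hv => by
    simp [M, inner_self_eq_norm_sq_to_K, hv]
  have hxw : ⟪x, T x⟫_ℂ - w = t * δ := by
    have hs' : (s : ℂ) = 1 - t := by rw [eq_sub_iff_add_eq]; exact_mod_cast hst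
    simp only [w, δ, Complex.real_smul, hs']; ring
  have hyw : ⟪y, T y⟫_ℂ - w = -(s * δ) := by
    have ht' : (t : ℂ) = 1 - s := by rw [eq_sub_iff_add_eq, add_comm]; exact_mod_cast hst
    simp only [w, δ, Complex.real_smul, ht']; ring
  obtain ⟨z, hz, hMz⟩ := zero_mem_numericalRange_of_nonneg_of_nonpos M (norm_ne_zero_iff.mp
    (hx.trans_ne one_ne_zero)) (norm_ne_zero_iff.mp (hy.trans_ne one_ne_zero))
    (mul_nonneg ht (sq_nonneg ‖δ‖)) (neg_nonpos.mpr (mul_nonneg hs (sq_nonneg ‖δ‖)))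
    (by rw [hM x hx, hxw, mul_left_comm, Complex.conj_mul']; push_cast; ring)
    (by rw [hM y hy, hyw, mul_neg, mul_left_comm, Complex.conj_mul']; push_cast; ring)
  refine ⟨z, hz, sub_eq_zero.mp ?_⟩
  rw [hM z hz] at hMz
  exact (mul_eq_zero.mp hMz).resolve_left ((map_ne_zero _).mpr hδ)

theorem trace_div_finrank_mem_numericalRange [FiniteDimensional ℂ E] [Nontrivial E]
    (T : E →ₗ[ℂ] E) : trace ℂ E T / finrank ℂ E ∈ T.numericalRange := by
  set b := stdOrthonormalBasis ℂ E
  have hn : (0 : ℝ) < finrank ℂ E := Nat.cast_pos.mpr finrank_pos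
  have hmean := (convex_numericalRange T).sum_mem (t := Finset.univ)
    (w := fun _ => (finrank ℂ E : ℝ)⁻¹) (z := fun i => ⟪b i, T (b i)⟫_ℂ)
    (fun _ _ => inv_nonneg.mpr hn.le) (by simp [hn.ne'])
    (fun i _ => ⟨b i, b.norm_eq_one i, rfl⟩)
  rwa [← Finset.smul_sum, ← trace_eq_sum_inner, Complex.real_smul, Complex.ofReal_inv,
    Complex.ofReal_natCast, ← div_eq_inv_mul] at hmean

theorem exists_orthonormalBasis_inner_apply_self_eq_zero {n : ℕ} [FiniteDimensional ℂ E]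
    (hn : finrank ℂ E = n) (T : E →ₗ[ℂ] E) (hT : trace ℂ E T = 0) :
    ∃ b : OrthonormalBasis (Fin n) ℂ E, ∀ i, ⟪b i, T (b i)⟫_ℂ = 0 := by
  induction n generalizing E with
  | zero => exact ⟨(stdOrthonormalBasis ℂ E).reindex (finCongr hn), fun i => i.elim0⟩
  | succ n ih =>
    have : Nontrivial E := Module.nontrivial_of_finrank_eq_succ hn
    have : Fact (finrank ℂ E = n + 1) := ⟨hn⟩
    obtain ⟨x, hx, hTx⟩ : (0 : ℂ) ∈ T.numericalRange := by
      simpa [hT] using T.trace_div_finrank_mem_numericalRange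
    obtain ⟨c, hc⟩ := ih (Submodule.finrank_orthogonal_span_singleton (norm_ne_zero_iff.mp
      (hx.trans_ne one_ne_zero))) (T.compression (ℂ ∙ x)ᗮ)
      (by rw [trace_compression_orthogonal_span_singleton T hx, hT, hTx, sub_zero])
    refine ⟨c.consOrthogonal hx, fun i => ?_⟩
    cases i using Fin.cases with
    | zero => rwa [OrthonormalBasis.consOrthogonal_zero]
    | succ i => rw [OrthonormalBasis.consOrthogonal_succ, ← inner_compression_apply, hc]

end LinearMap

theorem Matrix.exists_mem_unitaryGroup_diag_inv_mul_mul_eq_zero {ι : Type*} [Fintype ι]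
    [DecidableEq ι] (A : Matrix ι ι ℂ) (hA : A.trace = 0) :
    ∃ U ∈ unitaryGroup ι ℂ, (U⁻¹ * A * U).diag = 0 := by
  let e := EuclideanSpace.basisFun ι ℂ
  let T := Matrix.toLin e.toBasis e.toBasis A
  have hT : LinearMap.trace ℂ _ T = 0 := by
    rw [LinearMap.trace_eq_matrix_trace ℂ e.toBasis, LinearMap.toMatrix_toLin, hA]
  obtain ⟨b, hb⟩ := T.exists_orthonormalBasis_inner_apply_self_eq_zero finrank_euclideanSpace hT
  let b' := b.reindex (Fintype.equivFin ι).symm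
  refine ⟨e.toBasis.toMatrix b', e.toMatrix_orthonormalBasis_mem_unitary b', ?_⟩
  have hinv : (e.toBasis.toMatrix b')⁻¹ = b'.toBasis.toMatrix e :=
    inv_eq_left_inv (b'.toBasis.toMatrix_mul_toMatrix_flip e.toBasis)
  rw [hinv, ← LinearMap.toMatrix_toLin e.toBasis e.toBasis A, ← e.coe_toBasis, ← b'.coe_toBasis,
    basis_toMatrix_mul_linearMap_toMatrix_mul_basis_toMatrix]
  funext i
  simpa [LinearMap.toMatrix_apply, b', OrthonormalBasis.repr_apply_apply] using hb _

/-- every trace-zero complex matrix is unitarily similar to a matrix with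
zero diagonal. -/
theorem traceless_unitarily_hollow (d : ℕ) (A : Matrix (Fin d) (Fin d) ℂ)
    (hA : Matrix.trace A = 0) :
    ∃ U : Matrix (Fin d) (Fin d) ℂ, U ∈ Matrix.unitaryGroup (Fin d) ℂ ∧
      ∀ i, (U⁻¹ * A * U) i i = 0 := by
  obtain ⟨U, hU, hdiag⟩ := A.exists_mem_unitaryGroup_diag_inv_mul_mul_eq_zero hA
  exact ⟨U, hU, congrFun hdiag⟩
end

section
/- Every trace-zero matrix in M_d(ℂ) is a commutator: if A ∈ M_d(ℂ) satisfies Tr(A) = 0, then there exist X, Y ∈ M_d(ℂ) with A = XY − YX. -/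
/-!
A matrix `B` with zero diagonal is the commutator `[diagonal x, Y]` with
`Y i j = B i j / (x i - x j)`, for any `x` with pairwise distinct entries. It therefore suffices to
conjugate a traceless `A` to a matrix with zero diagonal. In characteristic zero a traceless scalar
matrix is `0`; otherwise some `v` is not an eigenvector, and in a basis starting with `v` and
containing `A v` the first diagonal entry vanishes. The complementary diagonal block is again
traceless, so induction on the size finishes.
-/

open Matrix Module

theorem Module.Basis.sumExtend_apply_inl {K V ι : Type*} [DivisionRing K] [AddCommGroup V]
    [Module K V] {v : ι → V} (hv : LinearIndependent K v) (i : ι) :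
    sumExtend hv (.inl i) = v i := by
  simp [sumExtend]
  rfl

namespace Matrix

section CommRing

variable {R : Type*} [CommRing R] {m n o : Type*} [Fintype m] [DecidableEq m] [Fintype n]
  [DecidableEq n] [Fintype o] [DecidableEq o]

theorem diagonal_mul_sub_mul_diagonal_apply (x : n → R) (Y : Matrix n n R) (i j : n) :
    (diagonal x * Y - Y * diagonal x) i j = (x i - x j) * Y i j := by
  simp only [sub_apply, diagonal_mul, mul_diagonal]
  ring

theorem exists_commutator_of_inv_mul_mul {P A : Matrix n n R} (hP : IsUnit P)
    (h : ∃ X Y, P⁻¹ * A * P = X * Y - Y * X) : ∃ X Y, A = X * Y - Y * X := by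
  obtain ⟨X, Y, hXY⟩ := h
  have hP' := (isUnit_iff_isUnit_det P).mp hP
  refine ⟨P * X * P⁻¹, P * Y * P⁻¹, ?_⟩
  calc A = P * (P⁻¹ * A * P) * P⁻¹ := by simp [Matrix.mul_assoc, hP']
    _ = _ := by rw [hXY]; simp [Matrix.mul_assoc, Matrix.mul_sub, Matrix.sub_mul, hP']

theorem inv_fromBlocks_zero_zero_mul_fromBlocks_mul {Q : Matrix m m R} {Q' : Matrix o o R}
    (hQ : IsUnit Q) (hQ' : IsUnit Q') (A : Matrix m m R) (B : Matrix m o R) (C : Matrix o m R)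
    (D : Matrix o o R) :
    (fromBlocks Q 0 0 Q')⁻¹ * fromBlocks A B C D * fromBlocks Q 0 0 Q' =
      fromBlocks (Q⁻¹ * A * Q) (Q⁻¹ * B * Q') (Q'⁻¹ * C * Q) (Q'⁻¹ * D * Q') := by
  rw [inv_fromBlocks_zero₂₁_of_isUnit_iff _ _ _ (iff_of_true hQ hQ')]
  simp [fromBlocks_multiply, Matrix.mul_assoc]

theorem diag_inv_mul_reindex_mul {P A : Matrix m m R} (e : m ≃ n) :
    ((reindex e e P)⁻¹ * reindex e e A * reindex e e P).diag = (P⁻¹ * A * P).diag ∘ e.symm := by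
  ext i
  simp [submatrix_mul_equiv]

omit [DecidableEq m] [DecidableEq n] in
theorem trace_reindex (e : m ≃ n) (A : Matrix m m R) : (reindex e e A).trace = A.trace :=
  e.symm.sum_comp fun i => A i i

end CommRing

variable {K : Type*} [Field K] {m n : Type*} [Fintype m] [DecidableEq m] [Fintype n]
  [DecidableEq n]

theorem exists_eq_diagonal_mul_sub_mul_diagonal {x : n → K} (hx : Function.Injective x)
    {B : Matrix n n K} (hB : B.diag = 0) : ∃ Y, B = diagonal x * Y - Y * diagonal x := by
  refine ⟨of fun i j => B i j / (x i - x j), ext fun i j => ?_⟩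
  rw [diagonal_mul_sub_mul_diagonal_apply, of_apply]
  obtain rfl | hij := eq_or_ne i j
  · simpa using congrFun hB i
  · rw [mul_div_cancel₀ _ (sub_ne_zero.mpr (hx.ne hij))]

theorem exists_eq_smul_one_of_forall_notLinearIndependent {A : Matrix n n K}
    (h : ∀ v, ¬ LinearIndependent K ![v, A *ᵥ v]) : ∃ a : K, A = a • 1 := by
  obtain ⟨a, ha⟩ := LinearMap.exists_eq_smul_id_of_forall_notLinearIndependent
    (f := A.mulVecLin) h
  refine ⟨a, toLin'.injective ?_⟩
  rw [toLin'_apply', ha, map_smul, toLin'_one, Module.End.one_eq_id]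

theorem exists_basis_apply_eq_and_repr_apply_eq_zero {v w : n → K}
    (h : LinearIndependent K ![v, w]) (i : n) :
    ∃ b : Basis n K (n → K), b i = v ∧ b.repr w i = 0 := by
  let b₀ := Basis.sumExtend h
  let e₀ := b₀.indexEquiv (Pi.basisFun K n)
  let e := e₀.trans (Equiv.swap (e₀ (.inl 0)) i)
  have he : e.symm i = .inl 0 := by simp [e]
  have hb₀ (k : Fin 2) : b₀ (.inl k) = ![v, w] k := Basis.sumExtend_apply_inl h k
  refine ⟨b₀.reindex e, ?_, ?_⟩
  · rw [Basis.reindex_apply, he, hb₀]; rfl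
  · have : b₀.repr (b₀ (.inl 1)) (.inl 0) = 0 := by simp
    rw [hb₀] at this
    simpa [Basis.repr_reindex_apply, he] using this

theorem inv_mul_mul_basis_toMatrix_apply (b : Basis n K (n → K)) (A : Matrix n n K) (i j : n) :
    (((Pi.basisFun K n).toMatrix b)⁻¹ * A * (Pi.basisFun K n).toMatrix b) i j =
      b.repr (A *ᵥ b j) i := by
  rw [inv_eq_left_inv (b.toMatrix_mul_toMatrix_flip _), Matrix.mul_assoc,
    basis_toMatrix_basisFun_mul, of_apply]
  rfl

theorem exists_inv_mul_mul_apply_self_eq_zero [CharZero K] {A : Matrix n n K} (hA : A.trace = 0)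
    (i : n) : ∃ P : Matrix n n K, IsUnit P ∧ (P⁻¹ * A * P) i i = 0 := by
  by_cases hind : ∃ v, LinearIndependent K ![v, A *ᵥ v]
  · obtain ⟨v, hv⟩ := hind
    obtain ⟨b, hbv, hb⟩ := exists_basis_apply_eq_and_repr_apply_eq_zero hv i
    let := (Pi.basisFun K n).invertibleToMatrix b
    exact ⟨_, isUnit_of_invertible _, by rw [inv_mul_mul_basis_toMatrix_apply, hbv, hb]⟩
  · push Not at hind
    obtain ⟨a, rfl⟩ := exists_eq_smul_one_of_forall_notLinearIndependent hind
    have : Nonempty n := ⟨i⟩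
    obtain rfl : a = 0 := by simpa [Fintype.card_ne_zero] using hA
    exact ⟨1, isUnit_one, by simp⟩

theorem exists_inv_mul_mul_diag_eq_zero_of_sum_unit [CharZero K]
    (ih : ∀ B : Matrix m m K, B.trace = 0 → ∃ Q : Matrix m m K, IsUnit Q ∧ (Q⁻¹ * B * Q).diag = 0)
    {A : Matrix (m ⊕ Unit) (m ⊕ Unit) K} (hA : A.trace = 0) :
    ∃ P : Matrix (m ⊕ Unit) (m ⊕ Unit) K, IsUnit P ∧ (P⁻¹ * A * P).diag = 0 := by
  obtain ⟨P, hP, hP0⟩ := exists_inv_mul_mul_apply_self_eq_zero hA (.inr ())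
  set M := P⁻¹ * A * P with hM
  have hM₁₁ : M.toBlocks₁₁.trace = 0 := by
    have : M.trace = 0 := by rw [hM, trace_conj' hP, hA]
    simpa [trace, Fintype.sum_sum_type, hP0, toBlocks₁₁] using this
  obtain ⟨Q, hQ, hQ0⟩ := ih _ hM₁₁
  refine ⟨P * fromBlocks Q 0 0 1, hP.mul (isUnit_fromBlocks_zero₂₁.mpr ⟨hQ, isUnit_one⟩), ?_⟩
  have : (P * fromBlocks Q 0 0 1)⁻¹ * A * (P * fromBlocks Q 0 0 1) =
      (fromBlocks Q 0 0 1)⁻¹ * M * fromBlocks Q 0 0 1 := by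
    simp [M, Matrix.mul_inv_rev, Matrix.mul_assoc]
  rw [this, ← fromBlocks_toBlocks M, inv_fromBlocks_zero_zero_mul_fromBlocks_mul hQ isUnit_one]
  ext (i | i)
  · exact congrFun hQ0 i
  · simpa [toBlocks₂₂] using hP0

theorem exists_inv_mul_mul_diag_eq_zero_of_equiv (e : m ≃ n)
    (h : ∀ B : Matrix m m K, B.trace = 0 → ∃ Q : Matrix m m K, IsUnit Q ∧ (Q⁻¹ * B * Q).diag = 0)
    {A : Matrix n n K} (hA : A.trace = 0) :
    ∃ P : Matrix n n K, IsUnit P ∧ (P⁻¹ * A * P).diag = 0 := by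
  obtain ⟨Q, hQ, hQ0⟩ := h (reindex e.symm e.symm A) (by rwa [trace_reindex])
  refine ⟨reindex e e Q, (isUnit_submatrix_equiv _ _).mpr hQ, ?_⟩
  have : A = reindex e e (reindex e.symm e.symm A) := by simp
  rw [this, diag_inv_mul_reindex_mul, hQ0]
  rfl

theorem exists_inv_mul_mul_diag_eq_zero [CharZero K] {A : Matrix n n K} (hA : A.trace = 0) :
    ∃ P : Matrix n n K, IsUnit P ∧ (P⁻¹ * A * P).diag = 0 := by
  suffices ∀ d (B : Matrix (Fin d) (Fin d) K), B.trace = 0 →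
      ∃ Q : Matrix (Fin d) (Fin d) K, IsUnit Q ∧ (Q⁻¹ * B * Q).diag = 0 from
    exists_inv_mul_mul_diag_eq_zero_of_equiv (Fintype.equivFin n).symm (this _) hA
  intro d
  induction d with
  | zero => exact fun B _ => ⟨1, isUnit_one, funext finZeroElim⟩
  | succ d ih =>
    exact fun B => exists_inv_mul_mul_diag_eq_zero_of_equiv
      ((Equiv.sumCongr (.refl _) finOneEquiv.symm).trans finSumFinEquiv)
      (fun _ => exists_inv_mul_mul_diag_eq_zero_of_sum_unit ih)

end Matrix

/-- Shoda, Albert–Muckenhoupt: every trace-zero matrix in `M_d(ℂ)` is a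
commutator. -/
theorem traceless_is_commutator (d : ℕ) (A : Matrix (Fin d) (Fin d) ℂ)
    (hA : Matrix.trace A = 0) :
    ∃ X Y : Matrix (Fin d) (Fin d) ℂ, A = X * Y - Y * X := by
  obtain ⟨P, hP, hdiag⟩ := exists_inv_mul_mul_diag_eq_zero hA
  obtain ⟨Y, hY⟩ :=
    exists_eq_diagonal_mul_sub_mul_diagonal (Nat.cast_injective.comp Fin.val_injective) hdiag
  exact exists_commutator_of_inv_mul_mul hP ⟨_, Y, hY⟩
end

section
/- Two words δ, τ in the free monoid on n generators are cyclically equivalent (one is a cyclic permutation of the other) if and only if δ − τ is a commutator in the free algebra ℂ⟨x₁,…,xₙ⟩, i.e., δ − τ = pq − qp for some noncommutative polynomials p, q (equivalently, δ − τ lies in the linear span of commutators). -/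
/-!
If `δ = u w` and `τ = w u`, then `δ - τ` is the commutator of `u` and `w`. Conversely, summing
the coefficients over the words that are rotations of `δ` is a linear functional that takes the
same value on `p q` and `q p`, because `a b` is a rotation of `δ` exactly when `b a` is. It
therefore vanishes on `δ - τ`, and since it is `1` on `δ` it must be `1` on `τ`, i.e. `τ` is a
rotation of `δ`.
-/

namespace MonoidAlgebra

variable {k M : Type*}

theorem map_mul_comm_of_map_single {N : Type*} [CommSemiring k] [Mul M] [AddCommMonoid N]
    (φ : MonoidAlgebra k M →+ N)
    (hφ : ∀ a b r, φ (single (a * b) r) = φ (single (b * a) r)) (x y : MonoidAlgebra k M) :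
    φ (x * y) = φ (y * x) := by
  induction x using induction_linear with
  | zero => simp
  | add x x' hx hx' => simp only [add_mul, mul_add, map_add, hx, hx']
  | single a r =>
    induction y using induction_linear with
    | zero => simp
    | add y y' hy hy' => simp only [add_mul, mul_add, map_add, hy, hy']
    | single b s => rw [single_mul_single, single_mul_single, mul_comm r, hφ]

theorem liftNC_indicator_mul_comm [CommSemiring k] [Mul M] {S : Set M}
    (hS : ∀ a b, a * b ∈ S ↔ b * a ∈ S) (x y : MonoidAlgebra k M) :
    liftNC (.id k) (S.indicator 1) (x * y) = liftNC (.id k) (S.indicator 1) (y * x) :=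
  map_mul_comm_of_map_single _ (fun a b r => by
    classical
    rw [liftNC_single, liftNC_single, Set.indicator_apply, Set.indicator_apply]
    simp only [hS a b, Pi.one_apply]) x y

theorem mem_of_of_sub_of_eq_commutator [CommRing k] [Nontrivial k] [Monoid M] {S : Set M}
    (hS : ∀ a b, a * b ∈ S ↔ b * a ∈ S) {δ τ : M} (hδ : δ ∈ S) {p q : MonoidAlgebra k M}
    (h : of k M δ - of k M τ = p * q - q * p) : τ ∈ S := by
  have hφ := congrArg (liftNC (.id k) (S.indicator 1)) h
  rw [map_sub, map_sub, liftNC_indicator_mul_comm hS, sub_self, of_apply, of_apply,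
    liftNC_single, liftNC_single, sub_eq_zero] at hφ
  by_contra hτ
  simp [hδ, hτ] at hφ

end MonoidAlgebra

namespace FreeMonoid

variable {α : Type*}

theorem isRotated_toList_mul_comm (a b : FreeMonoid α) : (a * b).toList ~r (b * a).toList := by
  simpa only [toList_mul] using List.isRotated_append

theorem isRotated_toList_iff {δ τ : FreeMonoid α} :
    δ.toList ~r τ.toList ↔ ∃ u w : FreeMonoid α, δ = u * w ∧ τ = w * u := by
  constructor
  · rw [List.isRotated_iff_mod]
    rintro ⟨m, hm, hrot⟩
    refine ⟨ofList (δ.toList.take m), ofList (δ.toList.drop m), ?_, ?_⟩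
    · rw [← ofList_append, List.take_append_drop, ofList_toList]
    · rw [← ofList_append, ← List.rotate_eq_drop_append_take hm, hrot, ofList_toList]
  · rintro ⟨u, w, rfl, rfl⟩
    exact isRotated_toList_mul_comm u w

end FreeMonoid

/-- two words in the free monoid are cyclically equivalent iff their
difference in the free algebra `ℂ⟨x₁,…,xₙ⟩` is a commutator. -/
theorem cyclically_equivalent_iff_commutator (n : ℕ) (δ τ : FreeMonoid (Fin n)) :
    (∃ u w : FreeMonoid (Fin n), δ = u * w ∧ τ = w * u) ↔
    (∃ p q : MonoidAlgebra ℂ (FreeMonoid (Fin n)),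
      MonoidAlgebra.of ℂ (FreeMonoid (Fin n)) δ - MonoidAlgebra.of ℂ (FreeMonoid (Fin n)) τ
        = p * q - q * p) := by
  constructor
  · rintro ⟨u, w, rfl, rfl⟩
    exact ⟨MonoidAlgebra.of ℂ _ u, MonoidAlgebra.of ℂ _ w, by simp only [map_mul]⟩
  · rintro ⟨p, q, h⟩
    have rotations_closed : ∀ a b : FreeMonoid (Fin n),
        δ.toList ~r (a * b).toList ↔ δ.toList ~r (b * a).toList := fun a b =>
      ⟨fun hab => hab.trans (FreeMonoid.isRotated_toList_mul_comm a b),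
        fun hba => hba.trans (FreeMonoid.isRotated_toList_mul_comm b a)⟩
    have hτ : τ ∈ {m : FreeMonoid (Fin n) | δ.toList ~r m.toList} :=
      MonoidAlgebra.mem_of_of_sub_of_eq_commutator rotations_closed (List.IsRotated.refl _) h
    exact FreeMonoid.isRotated_toList_iff.mp hτ
end

section
/- Let d ≥ 2, ω = e^{2πi/d}, u^p_q = y^q v^p ∈ M_d(ℂ) the clock-and-shift products. Let f(x₁,x₂,x₃) = Σ_{σ∈S₃} a_σ x_{σ(1)}x_{σ(2)}x_{σ(3)} with Σ_σ a_σ = 0. Then f(u^0_0, u^0_1, u^p_q) = (a₁₂₃ + a₂₁₃ + a₂₃₁)(1 − ω^p) u^p_{q+1}. -/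
open Matrix Complex

lemma vy_comm (d : ℕ) (hd : 2 ≤ d)
    (ω : ℂ) (hω : ω = Complex.exp (2 * Real.pi * Complex.I / d))
    (y v : Matrix (Fin d) (Fin d) ℂ)
    (hy : y = Matrix.diagonal fun j : Fin d => ω ^ (j : ℕ))
    (hv : v = Matrix.of fun j k : Fin d => if (k : ℕ) = ((j : ℕ) + 1) % d then 1 else 0) :
    v * y = ω • (y * v) := by
  have hωd : ω ^ d = 1 := by
    rw [hω, ← Complex.exp_nat_mul]
    have hd0 : (d : ℂ) ≠ 0 := Nat.cast_ne_zero.mpr (by omega)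
    rw [mul_div_cancel₀ _ hd0]
    simpa [mul_comm] using Complex.exp_two_pi_mul_I
  ext j k
  simp only [hy, hv, Matrix.mul_diagonal, Matrix.diagonal_mul, Matrix.smul_apply,
    Matrix.of_apply, smul_eq_mul]
  by_cases h : (k : ℕ) = ((j : ℕ) + 1) % d
  · simp only [h, if_pos rfl, if_true, mul_one, one_mul]
    rcases Nat.lt_or_ge ((j : ℕ) + 1) d with h' | h'
    · rw [Nat.mod_eq_of_lt h']; ring
    · have hjd : (j : ℕ) + 1 = d := by omega
      rw [hjd, Nat.mod_self, pow_zero, ← pow_succ', hjd, hωd]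
  · simp [h]

lemma vpy_comm (d : ℕ) (hd : 2 ≤ d)
    (ω : ℂ) (hω : ω = Complex.exp (2 * Real.pi * Complex.I / d))
    (y v : Matrix (Fin d) (Fin d) ℂ)
    (hy : y = Matrix.diagonal fun j : Fin d => ω ^ (j : ℕ))
    (hv : v = Matrix.of fun j k : Fin d => if (k : ℕ) = ((j : ℕ) + 1) % d then 1 else 0)
    (p : ℕ) :
    v ^ p * y = (ω ^ p) • (y * v ^ p) := by
  induction p with
  | zero => simp
  | succ n ih =>
    rw [pow_succ, mul_assoc, vy_comm d hd ω hω y v hy hv, Matrix.mul_smul, ← mul_assoc, ih,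
      smul_mul_assoc, smul_smul, ← mul_assoc, ← pow_succ', pow_succ]

/-- with `u^0_0 = I`, `u^0_1 = y`, `u^p_q = y^q v^p`, and coefficients
summing to zero, `f(u^0_0, u^0_1, u^p_q) = (a₁₂₃+a₂₁₃+a₂₃₁)(1−ω^p) u^p_{q+1}`. -/
theorem one_wiggle_value (d : ℕ) (hd : 2 ≤ d)
    (ω : ℂ) (hω : ω = Complex.exp (2 * Real.pi * Complex.I / d))
    (y v : Matrix (Fin d) (Fin d) ℂ)
    (hy : y = Matrix.diagonal fun j : Fin d => ω ^ (j : ℕ))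
    (hv : v = Matrix.of fun j k : Fin d => if (k : ℕ) = ((j : ℕ) + 1) % d then 1 else 0)
    (a123 a132 a213 a231 a312 a321 : ℂ)
    (hsum : a123 + a132 + a213 + a231 + a312 + a321 = 0)
    (p q : ℕ) :
    a123 • ((1 : Matrix (Fin d) (Fin d) ℂ) * y * (y ^ q * v ^ p)) +
      a132 • ((1 : Matrix (Fin d) (Fin d) ℂ) * (y ^ q * v ^ p) * y) +
      a213 • (y * (1 : Matrix (Fin d) (Fin d) ℂ) * (y ^ q * v ^ p)) +
      a231 • (y * (y ^ q * v ^ p) * (1 : Matrix (Fin d) (Fin d) ℂ)) +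
      a312 • ((y ^ q * v ^ p) * (1 : Matrix (Fin d) (Fin d) ℂ) * y) +
      a321 • ((y ^ q * v ^ p) * y * (1 : Matrix (Fin d) (Fin d) ℂ)) =
    ((a123 + a213 + a231) * (1 - ω ^ p)) • (y ^ (q + 1) * v ^ p) := by
  have h1 : y * (y ^ q * v ^ p) = y ^ (q + 1) * v ^ p := by
    rw [← mul_assoc, ← pow_succ']
  have h2 : (y ^ q * v ^ p) * y = (ω ^ p) • (y ^ (q + 1) * v ^ p) := by
    rw [mul_assoc, vpy_comm d hd ω hω y v hy hv, Matrix.mul_smul, ← mul_assoc, ← pow_succ]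
  simp only [one_mul, mul_one, h1, h2, smul_smul]
  match_scalars
  linear_combination (ω ^ p) * hsum
end

section
/- Let S₃(x₁,x₂,x₃) = x₁x₂x₃ + x₂x₃x₁ + x₃x₁x₂ − x₁x₃x₂ − x₃x₂x₁ − x₂x₁x₃ be the standard (Amitsur–Levitzki) polynomial of degree 3. For any α, β, γ ∈ ℂ, the diagonal matrix diag(α, β, γ) lies in the image of S₃ on M₃(ℂ)³. Explicitly, diag(α,β,γ) = S₃(N, L, D) where N is the 3×3 nilpotent Jordan block (ones on the superdiagonal), L is the matrix with L₂₁ = 2, L₃₂ = 1 and zeros elsewhere, and D = (1/6)·diag(5α/2 − 2β + γ, 2(α − 2β + γ), α − 2β − 2γ). -/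
/-!
The commutator `[N, L] = diag(2, -1, -1)` commutes with every diagonal `D`, so
`S₃(N, L, D) = 2 [N, L] D + L D N - N D L`, and each term is diagonal. Hence
`D ↦ S₃(N, L, D)` acts on the diagonal as the invertible linear map
`d ↦ (4d₁ - 2d₂, 2d₁ - 2d₂ - d₃, d₂ - 2d₃)`; the given `D` is the preimage of `(α, β, γ)`.
-/

open Matrix

def standardPoly3 {A : Type*} [Ring A] (x y z : A) : A :=
  x * y * z + y * z * x + z * x * y - x * z * y - z * y * x - y * x * z

theorem standardPoly3_eq_of_commute {A : Type*} [Ring A] {x y z : A}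
    (h : Commute (x * y - y * x) z) :
    standardPoly3 x y z = 2 * (x * y - y * x) * z + (y * z * x - x * z * y) := by
  calc standardPoly3 x y z
      = (x * y - y * x) * z + z * (x * y - y * x) + (y * z * x - x * z * y) := by
        unfold standardPoly3; noncomm_ring
    _ = 2 * (x * y - y * x) * z + (y * z * x - x * z * y) := by rw [← h.eq]; noncomm_ring

namespace StandardPoly3Witness

variable {R : Type*} [CommRing R]

def N : Matrix (Fin 3) (Fin 3) R := !![0, 1, 0; 0, 0, 1; 0, 0, 0]

def L : Matrix (Fin 3) (Fin 3) R := !![0, 0, 0; 2, 0, 0; 0, 1, 0]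

theorem N_mul_L_sub_L_mul_N :
    (N * L - L * N : Matrix (Fin 3) (Fin 3) R) = diagonal ![2, -1, -1] := by
  ext i j; fin_cases i <;> fin_cases j <;> norm_num [N, L, mul_apply, Fin.sum_univ_three]

theorem L_mul_diagonal_mul_N (d : Fin 3 → R) :
    L * diagonal d * N = diagonal ![0, 2 * d 0, d 1] := by
  ext i j; fin_cases i <;> fin_cases j <;>
    simp [N, L, mul_apply, Fin.sum_univ_three, vecMul_diagonal]

theorem N_mul_diagonal_mul_L (d : Fin 3 → R) :
    N * diagonal d * L = diagonal ![2 * d 1, d 2, 0] := by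
  ext i j; fin_cases i <;> fin_cases j <;>
    simp [N, L, mul_apply, Fin.sum_univ_three, vecMul_diagonal, mul_comm]

theorem standardPoly3_N_L_diagonal (d : Fin 3 → R) :
    standardPoly3 N L (diagonal d) =
      diagonal ![4 * d 0 - 2 * d 1, 2 * d 0 - 2 * d 1 - d 2, d 1 - 2 * d 2] := by
  have hc : Commute (N * L - L * N : Matrix (Fin 3) (Fin 3) R) (diagonal d) := by
    rw [N_mul_L_sub_L_mul_N]; exact commute_diagonal _ _
  rw [standardPoly3_eq_of_commute hc, N_mul_L_sub_L_mul_N, L_mul_diagonal_mul_N,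
    N_mul_diagonal_mul_L, ← diagonal_ofNat, diagonal_mul_diagonal, diagonal_mul_diagonal,
    diagonal_sub, diagonal_add]
  congr 1
  ext i; fin_cases i <;> simp <;> ring

end StandardPoly3Witness

open StandardPoly3Witness in
/-- every diagonal `3×3` matrix `diag(α,β,γ)` is an explicit value of the
standard polynomial `S₃`. -/
theorem diag_in_image_S3 (α β γ : ℂ)
    (S3 : Matrix (Fin 3) (Fin 3) ℂ → Matrix (Fin 3) (Fin 3) ℂ → Matrix (Fin 3) (Fin 3) ℂ →
      Matrix (Fin 3) (Fin 3) ℂ)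
    (hS3 : ∀ A B C, S3 A B C =
      A * B * C + B * C * A + C * A * B - A * C * B - C * B * A - B * A * C) :
    !![α, 0, 0; 0, β, 0; 0, 0, γ] =
      S3 !![0, 1, 0; 0, 0, 1; 0, 0, 0] !![0, 0, 0; 2, 0, 0; 0, 1, 0]
        ((1 / 6 : ℂ) •
          !![5 * α / 2 - 2 * β + γ, 0, 0;
             0, 2 * (α - 2 * β + γ), 0;
             0, 0, α - 2 * β - 2 * γ]) := by
  set d : Fin 3 → ℂ :=
    (1 / 6 : ℂ) • ![5 * α / 2 - 2 * β + γ, 2 * (α - 2 * β + γ), α - 2 * β - 2 * γ]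
  rw [hS3, ← diagonal_vec3, ← diagonal_vec3, ← diagonal_smul]
  change _ = standardPoly3 N L (diagonal d)
  rw [standardPoly3_N_L_diagonal]
  congr 1
  ext i; fin_cases i <;> simp [d] <;> ring
end

section
/- Let S₃(x₁,x₂,x₃) = x₁x₂x₃ + x₂x₃x₁ + x₃x₁x₂ − x₁x₃x₂ − x₃x₂x₁ − x₂x₁x₃. For any α ∈ ℂ, the full 3×3 Jordan block J = αI + N (with N the nilpotent matrix with ones on the superdiagonal) lies in the image of S₃ on M₃(ℂ)³. Explicitly, J = S₃(N, B, C) where B has rows (1,0,0), (1,0,0), (0,1,−1) and C = (1/2)·diag(α−1, −2, −α−1). -/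
open Matrix

/-- the full `3×3` Jordan block `αI + N` is an explicit value of the
standard polynomial `S₃`. -/
theorem jordan_block_in_image_S3 (α : ℂ)
    (S3 : Matrix (Fin 3) (Fin 3) ℂ → Matrix (Fin 3) (Fin 3) ℂ → Matrix (Fin 3) (Fin 3) ℂ →
      Matrix (Fin 3) (Fin 3) ℂ)
    (hS3 : ∀ A B C, S3 A B C =
      A * B * C + B * C * A + C * A * B - A * C * B - C * B * A - B * A * C) :
    !![α, 1, 0; 0, α, 1; 0, 0, α] =
      S3 !![0, 1, 0; 0, 0, 1; 0, 0, 0] !![1, 0, 0; 1, 0, 0; 0, 1, -1]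
        ((1 / 2 : ℂ) • !![α - 1, 0, 0; 0, -2, 0; 0, 0, -α - 1]) := by
  rw [hS3]
  ext i j
  fin_cases i <;> fin_cases j <;> simp <;> ring
end

section
/- Let S₃(x₁,x₂,x₃) = x₁x₂x₃ + x₂x₃x₁ + x₃x₁x₂ − x₁x₃x₂ − x₃x₂x₁ − x₂x₁x₃. For any α, β ∈ ℂ, the matrix with diagonal blocks [[α,1],[0,α]] and [β] (i.e., the matrix with entries (1,1)=(2,2)=α, (1,2)=1, (3,3)=β, zeros elsewhere) lies in the image of S₃ on M₃(ℂ)³. Explicitly, it equals S₃(N, diag(−1,1,2), C) where N is the nilpotent with N₁₂ = N₂₃ = 1 and C = (1/3)·(matrix with C₁₁ = 3, C₂₁ = α, C₃₂ = β, zeros elsewhere). -/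
open Matrix
set_option maxHeartbeats 1000000 in
/-- the `3×3` matrix with Jordan blocks `[[α,1],[0,α]]` and `[β]` is an
explicit value of the standard polynomial `S₃`. -/
theorem mixed_jordan_in_image_S3 (α β : ℂ)
    (S3 : Matrix (Fin 3) (Fin 3) ℂ → Matrix (Fin 3) (Fin 3) ℂ → Matrix (Fin 3) (Fin 3) ℂ →
      Matrix (Fin 3) (Fin 3) ℂ)
    (hS3 : ∀ A B C, S3 A B C =
      A * B * C + B * C * A + C * A * B - A * C * B - C * B * A - B * A * C) :
    !![α, 1, 0; 0, α, 0; 0, 0, β] =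
      S3 !![0, 1, 0; 0, 0, 1; 0, 0, 0] !![-1, 0, 0; 0, 1, 0; 0, 0, 2]
        ((1 / 3 : ℂ) • !![3, 0, 0; α, 0, 0; 0, β, 0]) := by
  have h : (1 / 3 : ℂ) • (!![3, 0, 0; α, 0, 0; 0, β, 0] : Matrix (Fin 3) (Fin 3) ℂ)
      = !![1, 0, 0; α/3, 0, 0; 0, β/3, 0] := by
    ext i j
    fin_cases i <;> fin_cases j <;>
      simp [Matrix.vecHead, Matrix.vecTail] <;> ring
  rw [hS3, h, Matrix.mul_fin_three, Matrix.mul_fin_three, Matrix.mul_fin_three,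
    Matrix.mul_fin_three, Matrix.mul_fin_three, Matrix.mul_fin_three, Matrix.mul_fin_three,
    Matrix.mul_fin_three, Matrix.mul_fin_three, Matrix.mul_fin_three, Matrix.mul_fin_three,
    Matrix.mul_fin_three]
  ext i j
  fin_cases i <;> fin_cases j <;>
    simp [Matrix.vecHead, Matrix.vecTail] <;> ring
end

section
/- Let f = Σ_{σ∈S₃} a_σ x_{σ(1)}x_{σ(2)}x_{σ(3)} be a multilinear complex polynomial of degree 3 and let d ∈ ℕ. If the image {f(A,B,C) : A,B,C ∈ M_d(ℂ)} is a vector subspace of M_d(ℂ), then it equals one of: {0}, ℂ·I_d, the trace-zero matrices, or all of M_d(ℂ). -/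
/-! The image of a multilinear polynomial is stable under conjugation by units, hence (conjugating
by `1 ± E_ij`) under `ad E_ij` for `i ≠ j`. A subspace with that property either consists of
scalars or contains some `E_ij`: use `⁅E_ji, ⁅E_ji, y⁆⁆ = -2 y_ij E_ji` if `y` has a nonzero
off-diagonal entry, and `⁅E_ij, y⁆ = (y_jj - y_ii) E_ij` if `y` is diagonal. Brackets then produce
every `E_kl` with `k ≠ l` and every `E_kk - E_ll`, so the subspace contains `sl_n`, which has
codimension one. -/

open Matrix

section Conjugation

variable {K R : Type*}

def unitOneAddOfMulSelfEqZero [Ring R] {N : R} (hN : N * N = 0) : Rˣ where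
  val := 1 + N
  inv := 1 - N
  val_inv := by simp [add_mul, mul_sub, hN]
  inv_val := by simp [sub_mul, mul_add, hN]

/-- `(1 + N) y (1 - N) - (1 - N) y (1 + N) = 2 ⁅N, y⁆` when `N² = 0`. -/
theorem Submodule.lie_mem_of_forall_units_conj_mem [Field K] [NeZero (2 : K)] [Ring R]
    [Module K R] (S : Submodule K R) (hS : ∀ u : Rˣ, ∀ y ∈ S, ↑u * y * ↑u⁻¹ ∈ S)
    {N : R} (hN : N * N = 0) {y : R} (hy : y ∈ S) : ⁅N, y⁆ ∈ S := by
  have hN' : -N * -N = 0 := by rw [neg_mul_neg, hN]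
  have hdiff := S.sub_mem (hS (unitOneAddOfMulSelfEqZero hN) y hy)
    (hS (unitOneAddOfMulSelfEqZero hN') y hy)
  have htwo : (1 + N) * y * (1 - N) - (1 + -N) * y * (1 - -N) = (2 : K) • ⁅N, y⁆ := by
    rw [two_smul, Ring.lie_def]; noncomm_ring
  rw [← S.smul_mem_iff (two_ne_zero : (2 : K) ≠ 0), ← htwo]
  exact hdiff

variable [Semiring R] [SMul K R] [IsScalarTower K R R] [SMulCommClass K R R]
  (a123 a132 a213 a231 a312 a321 : K)

def cubicMultilinear (A B C : R) : R :=
  a123 • (A * B * C) + a132 • (A * C * B) + a213 • (B * A * C) +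
    a231 • (B * C * A) + a312 • (C * A * B) + a321 • (C * B * A)

theorem cubicMultilinear_units_conj (u : Rˣ) (A B C : R) :
    cubicMultilinear a123 a132 a213 a231 a312 a321 (u * A * ↑u⁻¹) (u * B * ↑u⁻¹) (u * C * ↑u⁻¹) =
      u * cubicMultilinear a123 a132 a213 a231 a312 a321 A B C * ↑u⁻¹ := by
  have hmul : ∀ X Y : R, u * X * ↑u⁻¹ * (u * Y * ↑u⁻¹) = u * (X * Y) * ↑u⁻¹ := by
    intro X Y; simp [mul_assoc]
  simp only [cubicMultilinear, hmul, mul_add, add_mul, mul_smul_comm, smul_mul_assoc]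

end Conjugation

namespace Matrix

variable {K n : Type*} [Fintype n] [DecidableEq n]

theorem lie_single_lie_single_self [CommRing K] {i j : n} (hij : i ≠ j) (y : Matrix n n K) :
    ⁅single i j (1 : K), ⁅single i j (1 : K), y⁆⁆ = (-2 * y j i) • single i j 1 := by
  have hsq : single i j (1 : K) * single i j 1 = 0 := single_mul_single_of_ne _ _ _ _ hij.symm _
  have hexpand : ⁅single i j (1 : K), ⁅single i j (1 : K), y⁆⁆ =
      single i j 1 * single i j 1 * y - 2 • (single i j 1 * y * single i j 1) +
        y * (single i j 1 * single i j 1) := by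
    simp only [Ring.lie_def]; noncomm_ring
  rw [hexpand, hsq, single_mul_mul_single, smul_single]
  simp

theorem lie_single_diagonal [CommRing K] (i j : n) (v : n → K) :
    ⁅single i j (1 : K), diagonal v⁆ = (v j - v i) • single i j 1 := by
  ext p q
  simp only [Ring.lie_def, sub_apply, mul_diagonal, diagonal_mul, smul_apply, single_apply,
    smul_eq_mul, mul_ite, mul_one, mul_zero]
  split_ifs with h
  · obtain ⟨rfl, rfl⟩ := h; ring
  · ring

variable [Field K]

/-- A weak form of being a Lie ideal: only brackets with off-diagonal matrix units are required. -/
def IsAdOffDiagInvariant (S : Submodule K (Matrix n n K)) : Prop :=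
  ∀ i j : n, i ≠ j → ∀ y ∈ S, ⁅single i j (1 : K), y⁆ ∈ S

namespace IsAdOffDiagInvariant

variable {S : Submodule K (Matrix n n K)}

theorem exists_single_mem [NeZero (2 : K)] (hS : IsAdOffDiagInvariant S) {y : Matrix n n K}
    (hy : y ∈ S) (hy_scalar : y ∉ Set.range (scalar n)) :
    ∃ i j, i ≠ j ∧ single i j (1 : K) ∈ S := by
  by_cases hoff : ∃ i j, i ≠ j ∧ y i j ≠ 0
  · obtain ⟨i, j, hij, hyij⟩ := hoff
    refine ⟨j, i, hij.symm, ?_⟩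
    have h := hS j i hij.symm _ (hS j i hij.symm y hy)
    rwa [lie_single_lie_single_self hij.symm, S.smul_mem_iff (by simp [hyij, two_ne_zero])] at h
  · push Not at hoff
    have hdiag : diagonal (diag y) = y := (isDiag_iff_diagonal_diag y).mp hoff
    obtain ⟨i, j, hij, hcomm⟩ : ∃ i j, i ≠ j ∧ ¬Commute (single i j (1 : K)) y := by
      rw [mem_range_scalar_iff_commute_single] at hy_scalar
      push Not at hy_scalar
      exact hy_scalar
    have h := hS i j hij y hy
    rw [commute_iff_lie_eq, ← hdiag, lie_single_diagonal] at hcomm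
    rw [← hdiag, lie_single_diagonal, S.smul_mem_iff (left_ne_zero_of_smul hcomm)] at h
    exact ⟨i, j, hij, h⟩

theorem single_swap_mem [NeZero (2 : K)] (hS : IsAdOffDiagInvariant S) {i j : n} (hij : i ≠ j)
    (h : single i j (1 : K) ∈ S) : single j i (1 : K) ∈ S := by
  have h' := hS j i hij.symm _ (hS j i hij.symm _ h)
  rwa [lie_single_lie_single_self hij.symm, single_apply_same, mul_one,
    S.smul_mem_iff (by simp [two_ne_zero])] at h'

theorem single_mem_of_same_col (hS : IsAdOffDiagInvariant S) {i j k : n}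
    (h : single i j (1 : K) ∈ S) (hkj : k ≠ j) : single k j (1 : K) ∈ S := by
  rcases eq_or_ne k i with rfl | hki
  · exact h
  have h' := hS k i hki _ h
  rwa [Ring.lie_def, single_mul_single_same, single_mul_single_of_ne _ _ _ _ hkj.symm, sub_zero,
    mul_one] at h'

theorem single_mem_of_same_row (hS : IsAdOffDiagInvariant S) {i j l : n}
    (h : single i j (1 : K) ∈ S) (hli : l ≠ i) : single i l (1 : K) ∈ S := by
  rcases eq_or_ne l j with rfl | hlj
  · exact h
  have h' := hS j l hlj.symm _ h
  rwa [Ring.lie_def, single_mul_single_of_ne _ _ _ _ hli, single_mul_single_same, zero_sub,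
    neg_mem_iff, mul_one] at h'

theorem single_mem_of_ne [NeZero (2 : K)] (hS : IsAdOffDiagInvariant S) {i j : n} (hij : i ≠ j)
    (h : single i j (1 : K) ∈ S) {k l : n} (hkl : k ≠ l) : single k l (1 : K) ∈ S := by
  rcases eq_or_ne l i with rfl | hli
  · exact hS.single_mem_of_same_col (hS.single_swap_mem hij h) hkl
  · exact hS.single_mem_of_same_col (hS.single_mem_of_same_row h hli) hkl

theorem single_sub_single_mem (hS : IsAdOffDiagInvariant S)
    (hoff : ∀ k l : n, k ≠ l → single k l (1 : K) ∈ S) (k j : n) :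
    single k k (1 : K) - single j j 1 ∈ S := by
  rcases eq_or_ne k j with rfl | hkj
  · rw [sub_self]; exact S.zero_mem
  have h := hS k j hkj _ (hoff j k hkj.symm)
  rwa [Ring.lie_def, single_mul_single_same, single_mul_single_same, mul_one] at h

theorem sub_trace_smul_single_mem (hS : IsAdOffDiagInvariant S)
    (hoff : ∀ k l : n, k ≠ l → single k l (1 : K) ∈ S) (j : n) (m : Matrix n n K) :
    m - trace m • single j j (1 : K) ∈ S := by
  have hdecomp : m - trace m • single j j (1 : K) =
      ∑ k, ∑ l, m k l • (single k l 1 - if k = l then single j j 1 else 0) := by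
    simp only [smul_sub, Finset.sum_sub_distrib, smul_ite, smul_zero, Finset.sum_ite_eq,
      Finset.mem_univ, if_true, ← Finset.sum_smul]
    rw [trace]
    congr 1
    simp only [smul_single, smul_eq_mul, mul_one]
    exact matrix_eq_sum_single m
  rw [hdecomp]
  refine Submodule.sum_mem _ fun k _ => Submodule.sum_mem _ fun l _ => S.smul_mem _ ?_
  split_ifs with hkl
  · subst hkl; exact hS.single_sub_single_mem hoff k j
  · rw [sub_zero]; exact hoff k l hkl

theorem eq_bot_or_eq_span_one_or_eq_ker_trace_or_eq_top [NeZero (2 : K)]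
    (hS : IsAdOffDiagInvariant S) :
    S = ⊥ ∨ S = K ∙ 1 ∨ S = LinearMap.ker (traceLinearMap n K K) ∨ S = ⊤ := by
  cases isEmpty_or_nonempty n
  · exact Or.inr (Or.inr (Or.inr (Subsingleton.elim _ _)))
  by_cases hscalar : ∀ y ∈ S, y ∈ Set.range (scalar n)
  · have hle : S ≤ K ∙ 1 := fun y hy => by
      obtain ⟨c, rfl⟩ := hscalar y hy
      exact Submodule.mem_span_singleton.mpr ⟨c, by rw [smul_one_eq_diagonal, scalar_apply]⟩
    rcases (nonzero_span_atom (1 : Matrix n n K) one_ne_zero).le_iff.mp hle with h | h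
    · exact Or.inl h
    · exact Or.inr (Or.inl h)
  push Not at hscalar
  obtain ⟨y, hy, hy_scalar⟩ := hscalar
  obtain ⟨i, j, hij, hsingle⟩ := hS.exists_single_mem hy hy_scalar
  have hker : LinearMap.ker (traceLinearMap n K K) ≤ S := fun m (hm : trace m = 0) => by
    simpa [hm] using
      hS.sub_trace_smul_single_mem (fun k l => hS.single_mem_of_ne hij hsingle) j m
  rcases (LinearMap.isCoatom_ker_of_surjective trace_surjective).le_iff.mp hker with h | h
  · exact Or.inr (Or.inr (Or.inr h))
  · exact Or.inr (Or.inr (Or.inl h))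

end IsAdOffDiagInvariant

end Matrix

/-- if the image of a multilinear degree-3 polynomial on `M_d(ℂ)` is a
vector subspace, then it is `{0}`, `ℂ·I`, the trace-zero matrices, or `M_d(ℂ)`. -/
theorem image_subspace_classification (d : ℕ)
    (a123 a132 a213 a231 a312 a321 : ℂ)
    (S : Submodule ℂ (Matrix (Fin d) (Fin d) ℂ))
    (hS : (S : Set (Matrix (Fin d) (Fin d) ℂ)) =
      {X | ∃ A B C : Matrix (Fin d) (Fin d) ℂ,
        a123 • (A * B * C) + a132 • (A * C * B) + a213 • (B * A * C) +
          a231 • (B * C * A) + a312 • (C * A * B) + a321 • (C * B * A) = X}) :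
    (S : Set (Matrix (Fin d) (Fin d) ℂ)) = {0} ∨
    S = Submodule.span ℂ {(1 : Matrix (Fin d) (Fin d) ℂ)} ∨
    (S : Set (Matrix (Fin d) (Fin d) ℂ)) = {X | Matrix.trace X = 0} ∨
    S = ⊤ := by
  have hS' : IsAdOffDiagInvariant S := by
    refine fun i j hij y hy => S.lie_mem_of_forall_units_conj_mem (fun u x hx => ?_)
      (single_mul_single_of_ne _ _ _ _ hij.symm _) hy
    rw [← SetLike.mem_coe, hS] at hx ⊢
    obtain ⟨A, B, C, rfl⟩ := hx
    have h := cubicMultilinear_units_conj a123 a132 a213 a231 a312 a321 u A B C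
    unfold cubicMultilinear at h
    exact ⟨_, _, _, h⟩
  rcases hS'.eq_bot_or_eq_span_one_or_eq_ker_trace_or_eq_top with h | h | h | h
  · exact Or.inl (by rw [h, Submodule.bot_coe])
  · exact Or.inr (Or.inl h)
  · exact Or.inr (Or.inr (Or.inl (by rw [h]; rfl)))
  · exact Or.inr (Or.inr (Or.inr h))
end
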